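/- Let Γ = (T, τ) be a 2HAM system and A an assembly. Suppose some producible assembly of Γ is not a subassembly of A. Then either there exists a single-tile assembly t of T with t not a subassembly of A, or there exist producible assemblies B, C ∈ P'_Γ with B ⊑ A and C ⊑ A such that B and C are τ-combinable into a rogue assembly R, i.e., some R ∈ P'_Γ with R not a subassembly of A. -/

import Mathlib

namespace TwoHAM

/-- A tile: a non-rotating unit square with a glue on each of its four sides. -/
structure Tile (Glue : Type) where
  north : Glue
  south : Glue
  east : Glue
  west : Glue

variable {Glue : Type}

/-- The strength of the abutting glues of tile `t₁` placed at position `p` and tile `t₂`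
placed at position `q`; zero if `p` and `q` are not adjacent. -/
def bondStrength (str : Glue → Glue → ℕ) (t₁ t₂ : Tile Glue) (p q : ℤ × ℤ) : ℕ :=
  if q = (p.1 + 1, p.2) then str t₁.east t₂.west
  else if q = (p.1 - 1, p.2) then str t₁.west t₂.east
  else if q = (p.1, p.2 + 1) then str t₁.north t₂.south
  else if q = (p.1, p.2 - 1) then str t₁.south t₂.north
  else 0

/-- A configuration: a partial function from `ℤ²` to tiles with finite nonempty domain. -/
structure Config (Glue : Type) where
  tiles : ℤ × ℤ → Option (Tile Glue)
  finite : {p : ℤ × ℤ | tiles p ≠ none}.Finite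
  nonempty : {p : ℤ × ℤ | tiles p ≠ none}.Nonempty

namespace Config

/-- The domain of a configuration. -/
def dom (C : Config Glue) : Set (ℤ × ℤ) := {p : ℤ × ℤ | C.tiles p ≠ none}

end Config

/-- The glue strength contributed between position `p` of configuration `C₁` and
position `q` of configuration `C₂`. -/
def crossBond (str : Glue → Glue → ℕ) (C₁ C₂ : Config Glue) (p q : ℤ × ℤ) : ℕ :=
  match C₁.tiles p, C₂.tiles q with
  | some t₁, some t₂ => bondStrength str t₁ t₂ p q
  | _, _ => 0

/-- `(p, q)` is a binding site between configurations `C₁` and `C₂` if the abutting glues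
of the tiles of `C₁` at `p` and of `C₂` at `q` have positive strength. -/
def IsBindingSite (str : Glue → Glue → ℕ) (C₁ C₂ : Config Glue) (p q : ℤ × ℤ) : Prop :=
  0 < crossBond str C₁ C₂ p q

namespace Config

/-- The glue strength between positions `p` and `q` within a configuration. -/
def bond (str : Glue → Glue → ℕ) (C : Config Glue) (p q : ℤ × ℤ) : ℕ :=
  crossBond str C C p q

/-- The bond graph of a configuration: adjacent positions with positive abutting glue
strength are joined by an edge. -/
def bondGraph (str : Glue → Glue → ℕ) (C : Config Glue) : SimpleGraph (ℤ × ℤ) where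
  Adj p q := p ≠ q ∧ (0 < C.bond str p q ∨ 0 < C.bond str q p)
  symm := by
    refine ⟨?_⟩
    rintro p q ⟨h1, h2⟩
    exact ⟨h1.symm, h2.symm⟩
  loopless := by
    refine ⟨?_⟩
    rintro p ⟨h1, _⟩
    exact h1 rfl

/-- The bond graph of a configuration is connected (all positions of the domain are
mutually reachable). -/
def Connected (str : Glue → Glue → ℕ) (C : Config Glue) : Prop :=
  ∀ p ∈ C.dom, ∀ q ∈ C.dom, (C.bondGraph str).Reachable p q

/-- The domain of a configuration as a finset. -/
noncomputable def domFinset (C : Config Glue) : Finset (ℤ × ℤ) := C.finite.toFinset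

/-- The total weight of the edge cut of the bond graph determined by a set `S`. -/
noncomputable def cutWeight (str : Glue → Glue → ℕ) (C : Config Glue)
    (S : Finset (ℤ × ℤ)) : ℕ :=
  ∑ p ∈ S, ∑ q ∈ C.domFinset \ S, C.bond str p q

/-- A configuration is `τ`-stable if its bond graph is connected and every edge cut has
total weight at least `τ`. -/
def IsStable (str : Glue → Glue → ℕ) (τ : ℕ) (C : Config Glue) : Prop :=
  C.Connected str ∧
    ∀ S : Finset (ℤ × ℤ), S ⊆ C.domFinset → S.Nonempty → (C.domFinset \ S).Nonempty →
      τ ≤ C.cutWeight str S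

/-- The translation of a configuration by a vector `v`. -/
def translate (C : Config Glue) (v : ℤ × ℤ) : Config Glue where
  tiles p := C.tiles (p - v)
  finite := by
    have h : {p : ℤ × ℤ | C.tiles (p - v) ≠ none} =
        (fun q : ℤ × ℤ => q + v) '' {p : ℤ × ℤ | C.tiles p ≠ none} := by
      ext p
      constructor
      · intro hp
        exact ⟨p - v, hp, sub_add_cancel p v⟩
      · rintro ⟨q, hq, rfl⟩
        simpa using hq
    rw [h]
    exact C.finite.image _
  nonempty := by
    obtain ⟨p, hp⟩ := C.nonempty
    exact ⟨p + v, by simpa using hp⟩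

/-- `C₁` is a restriction of `C₂`. -/
def Subconfig (C₁ C₂ : Config Glue) : Prop :=
  ∀ p : ℤ × ℤ, C₁.tiles p ≠ none → C₁.tiles p = C₂.tiles p

/-- A configuration is tree-bonded if its bond graph is a tree (connected and acyclic). -/
def IsTreeBonded (str : Glue → Glue → ℕ) (C : Config Glue) : Prop :=
  C.Connected str ∧ (C.bondGraph str).IsAcyclic

end Config

/-- The assembly of a configuration: the set of all of its translations. -/
def asmOf (C : Config Glue) : Set (Config Glue) := {C' | ∃ v : ℤ × ℤ, C' = C.translate v}

/-- A set of configurations is an assembly if it is the set of all translations of some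
configuration. -/
def IsAssembly (A : Set (Config Glue)) : Prop := ∃ C : Config Glue, A = asmOf C

/-- An assembly is `τ`-stable if its configurations are. -/
def IsStableAssembly (str : Glue → Glue → ℕ) (τ : ℕ) (A : Set (Config Glue)) : Prop :=
  ∀ C ∈ A, C.IsStable str τ

/-- An assembly is tree-bonded if the bond graph of its configurations is a tree. -/
def IsTreeBondedAssembly (str : Glue → Glue → ℕ) (A : Set (Config Glue)) : Prop :=
  ∀ C ∈ A, C.IsTreeBonded str

/-- `A ⊑ B`: some configuration of `A` is a restriction of some configuration of `B`. -/
def Subassembly (A B : Set (Config Glue)) : Prop :=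
  ∃ C₁ ∈ A, ∃ C₂ ∈ B, Config.Subconfig C₁ C₂

/-- Union of two partial tile maps (preferring the first). -/
def optOr {α : Type} (a b : Option α) : Option α :=
  match a with
  | some x => some x
  | none => b

/-- Assemblies `A` and `B` are `τ`-combinable into `C`. -/
def Combinable (str : Glue → Glue → ℕ) (τ : ℕ) (A B C : Set (Config Glue)) : Prop :=
  ∃ CA ∈ A, ∃ CB ∈ B, ∃ CC ∈ C,
    (∀ p : ℤ × ℤ, CC.tiles p = optOr (CA.tiles p) (CB.tiles p)) ∧
    CA.dom ∩ CB.dom = ∅ ∧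
    CC.IsStable str τ

/-- The configuration consisting of a single tile `t` at the origin. -/
def singletonConfig (t : Tile Glue) : Config Glue where
  tiles p := if p = ((0 : ℤ), (0 : ℤ)) then some t else none
  finite := by
    apply Set.Finite.subset (Set.finite_singleton ((0 : ℤ), (0 : ℤ)))
    intro p hp
    by_cases h : p = ((0 : ℤ), (0 : ℤ)) <;> simp_all
  nonempty := ⟨((0 : ℤ), (0 : ℤ)), by simp⟩

/-- The producible assemblies of the 2HAM system `Γ = (T, τ)`. -/
inductive Producible (str : Glue → Glue → ℕ) (T : Set (Tile Glue)) (τ : ℕ) :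
    Set (Config Glue) → Prop
  | single (t : Tile Glue) (ht : t ∈ T) : Producible str T τ (asmOf (singletonConfig t))
  | combine {A B C : Set (Config Glue)} : Producible str T τ A → Producible str T τ B →
      Combinable str τ A B C → Producible str T τ C

/-- A producible assembly is terminal if it is not `τ`-combinable with any producible
assembly. -/
def Terminal (str : Glue → Glue → ℕ) (T : Set (Tile Glue)) (τ : ℕ)
    (A : Set (Config Glue)) : Prop :=
  Producible str T τ A ∧
    ∀ B C : Set (Config Glue), Producible str T τ B → ¬ Combinable str τ A B C

/-- `Γ = (T, τ)` uniquely produces `A`. -/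
def UniquelyProduces (str : Glue → Glue → ℕ) (T : Set (Tile Glue)) (τ : ℕ)
    (A : Set (Config Glue)) : Prop :=
  (∀ X : Set (Config Glue), Terminal str T τ X ↔ X = A) ∧
    ∀ B : Set (Config Glue), Producible str T τ B → Subassembly B A

/-- The modified strength function of the noncooperative (temperature 1) system:
strength `1` exactly for glue pairs of strength at least `τ`. -/
def capStr (str : Glue → Glue → ℕ) (τ : ℕ) : Glue → Glue → ℕ :=
  fun g g' => if τ ≤ str g g' then 1 else 0

/-- A `τ`-combination that uses cooperative binding: every binding site between the two
combined configurations has strength strictly less than `τ`. -/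
def CombinableCoop (str : Glue → Glue → ℕ) (τ : ℕ) (A B C : Set (Config Glue)) : Prop :=
  ∃ CA ∈ A, ∃ CB ∈ B, ∃ CC ∈ C,
    (∀ p : ℤ × ℤ, CC.tiles p = optOr (CA.tiles p) (CB.tiles p)) ∧
    CA.dom ∩ CB.dom = ∅ ∧
    CC.IsStable str τ ∧
    ∀ p q : ℤ × ℤ, crossBond str CA CB p q < τ

end TwoHAM

namespace TwoHAM

variable {Glue : Type} {str : Glue → Glue → ℕ} {T : Set (Tile Glue)} {τ : ℕ}

theorem Producible.exists_tile_or_combinable_of_not {P : Set (Config Glue) → Prop}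
    {R : Set (Config Glue)} (hR : Producible str T τ R) (hPR : ¬ P R) :
    (∃ t ∈ T, ¬ P (asmOf (singletonConfig t))) ∨
      (∃ B C R' : Set (Config Glue),
        Producible str T τ B ∧ Producible str T τ C ∧ P B ∧ P C ∧
        Combinable str τ B C R' ∧ Producible str T τ R' ∧ ¬ P R') := by
  induction hR with
  | single t ht => exact Or.inl ⟨t, ht, hPR⟩
  | @combine B C R hB hC hcomb ihB ihC =>
    by_cases hPB : P B
    · by_cases hPC : P C
      · exact Or.inr ⟨B, C, R, hB, hC, hPB, hPC, hcomb, hB.combine hC hcomb, hPR⟩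
      · exact ihC hPC
    · exact ihB hPB

theorem lemma_subassembly_rogue_general {Glue : Type}
    (str : Glue → Glue → ℕ)
    (T : Set (Tile Glue)) (τ : ℕ)
    (A : Set (Config Glue))
    (hbad : ∃ R : Set (Config Glue), Producible str T τ R ∧ ¬ Subassembly R A) :
    (∃ t ∈ T, ¬ Subassembly (asmOf (singletonConfig t)) A) ∨
      (∃ B C R : Set (Config Glue),
        Producible str T τ B ∧ Producible str T τ C ∧
        Subassembly B A ∧ Subassembly C A ∧
        Combinable str τ B C R ∧
        Producible str T τ R ∧ ¬ Subassembly R A) := by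
  obtain ⟨R, hR, hRA⟩ := hbad
  exact hR.exists_tile_or_combinable_of_not (P := (Subassembly · A)) hRA

/-- If some producible assembly of the 2HAM system `Γ = (T, τ)` is not a
subassembly of `A`, then either some single-tile assembly of a tile of `T` is not a
subassembly of `A`, or there exist producible assemblies `B, C ⊑ A` that are
`τ`-combinable into a rogue assembly `R` (a producible assembly not a subassembly of `A`). -/
theorem lemma_subassembly_rogue {Glue : Type} [Fintype Glue]
    (str : Glue → Glue → ℕ) (hsym : ∀ g g' : Glue, str g g' = str g' g)
    (T : Set (Tile Glue)) (hT : T.Finite) (τ : ℕ) (hτ : 0 < τ)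
    (A : Set (Config Glue)) (hA : IsAssembly A)
    (hbad : ∃ R : Set (Config Glue), Producible str T τ R ∧ ¬ Subassembly R A) :
    (∃ t ∈ T, ¬ Subassembly (asmOf (singletonConfig t)) A) ∨
      (∃ B C R : Set (Config Glue),
        Producible str T τ B ∧ Producible str T τ C ∧
        Subassembly B A ∧ Subassembly C A ∧
        Combinable str τ B C R ∧
        Producible str T τ R ∧ ¬ Subassembly R A) :=
  lemma_subassembly_rogue_general str T τ A hbad

end TwoHAM
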